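/- Let F = (F_1, …, F_n) be a polynomial vector field on ℝⁿ, let V, B, m_1, …, m_r ∈ ℝ[x_1, …, x_n], and let α > 0. Suppose there exist SOS polynomials s_1, s_2, n_1, …, n_r ∈ ℝ[x_1, …, x_n] such that: −⟨∇V, F⟩ − s_1·B is SOS, ⟨∇B, F⟩ + (α − s_2)·B is SOS, and −n_i·m_i − B is SOS for each i = 1, …, r. Then for every solution x : ℝ → ℝⁿ of ẋ = F(x) with B(x(0)) > 0: (i) B(x(t)) > 0 for all t ≥ 0; (ii) m_i(x(t)) < 0 for all t ≥ 0 and all i, so the trajectory never enters any of the regions {y : m_i(y) ≥ 0}; and (iii) t ↦ V(x(t)) is nonincreasing on [0, ∞). -/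

import Mathlib

open MvPolynomial Set

/-- A real multivariate polynomial is a sum of squares. -/
def IsSOS {N : ℕ} (p : MvPolynomial (Fin N) ℝ) : Prop :=
  ∃ (k : ℕ) (f : Fin k → MvPolynomial (Fin N) ℝ), p = ∑ i, (f i) ^ 2

/-- The Lie derivative ⟨∇W, F⟩ = Σᵢ (∂W/∂xᵢ)·Fᵢ of a polynomial `W` along a
polynomial vector field `F`. -/
noncomputable def lieDeriv {N : ℕ} (W : MvPolynomial (Fin N) ℝ)
    (F : Fin N → MvPolynomial (Fin N) ℝ) : MvPolynomial (Fin N) ℝ :=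
  ∑ i, (pderiv i W) * F i

/-!
Along a trajectory the derivative of `t ↦ W (x t)` is `⟨∇W, F⟩ (x t)`. Where `B > 0` the second
constraint gives `(B ∘ x)' + α (B ∘ x) ≥ s₂ B ≥ 0`, so `t ↦ e^{α t} B (x t)` is nondecreasing
up to the first time `B (x t) ≤ 0`; evaluated at that time this contradicts `B (x 0) > 0`.
Once `B > 0` along the trajectory, the third constraint gives `nᵢ mᵢ ≤ -B < 0`, hence `mᵢ < 0`,
and the first gives `(V ∘ x)' ≤ -s₁ B ≤ 0`.
-/

theorem IsSOS.eval_nonneg {N : ℕ} {p : MvPolynomial (Fin N) ℝ} (hp : IsSOS p) (y : Fin N → ℝ) :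
    0 ≤ eval y p := by
  obtain ⟨k, f, rfl⟩ := hp
  simp only [map_sum, map_pow]
  positivity

theorem MvPolynomial.hasDerivAt_eval_comp {σ : Type*} [Fintype σ] {x : ℝ → σ → ℝ}
    {x' : σ → ℝ} {t : ℝ} (hx : ∀ i, HasDerivAt (fun τ => x τ i) (x' i) t)
    (p : MvPolynomial σ ℝ) :
    HasDerivAt (fun τ => eval (x τ) p) (∑ i, eval (x t) (pderiv i p) * x' i) t := by
  classical
  induction p using MvPolynomial.induction_on with
  | C a => simpa using hasDerivAt_const t a
  | add p q hp hq =>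
    simpa only [map_add, eval_add, add_mul, Finset.sum_add_distrib] using hp.fun_add hq
  | mul_X p j hp =>
    simp only [eval_mul, eval_X]
    refine (hp.fun_mul (hx j)).congr_deriv ?_
    simp only [Derivation.leibniz, pderiv_X, smul_eq_mul, map_add, map_mul, eval_X, add_mul,
      Finset.sum_add_distrib, Pi.single_apply, mul_ite, mul_one, mul_zero, apply_ite (eval (x t)),
      map_zero, ite_mul, zero_mul, Finset.sum_ite_eq, Finset.mem_univ, if_true, Finset.sum_mul]
    rw [add_comm]
    congr 1
    exact Finset.sum_congr rfl fun i _ => by ring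

theorem hasDerivAt_eval_lieDeriv {N : ℕ} {F : Fin N → MvPolynomial (Fin N) ℝ}
    {x : ℝ → Fin N → ℝ} {t : ℝ}
    (hx : ∀ i, HasDerivAt (fun τ => x τ i) (eval (x t) (F i)) t) (W : MvPolynomial (Fin N) ℝ) :
    HasDerivAt (fun τ => eval (x τ) W) (eval (x t) (lieDeriv W F)) t := by
  simpa only [lieDeriv, map_sum, map_mul] using hasDerivAt_eval_comp hx W

theorem ContinuousOn.exists_first_nonpos {b : ℝ → ℝ} {a t₁ : ℝ} (hb : ContinuousOn b (Icc a t₁))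
    (hat₁ : a ≤ t₁) (ha : 0 < b a) (ht₁ : b t₁ ≤ 0) :
    ∃ t₀, a < t₀ ∧ b t₀ ≤ 0 ∧ ∀ t ∈ Ico a t₀, 0 < b t := by
  have hclosed : IsClosed (Icc a t₁ ∩ b ⁻¹' Iic 0) :=
    hb.preimage_isClosed_of_isClosed isClosed_Icc isClosed_Iic
  obtain ⟨t₀, ⟨⟨hat₀, ht₀t₁⟩, hbt₀⟩, hleast⟩ :=
    (isCompact_Icc.of_isClosed_subset hclosed inter_subset_left).exists_isLeast
      ⟨t₁, ⟨hat₁, le_rfl⟩, ht₁⟩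
  refine ⟨t₀, hat₀.lt_of_ne ?_, hbt₀, fun t ⟨hat, htt₀⟩ => ?_⟩
  · rintro rfl
    exact (not_le.2 ha) hbt₀
  · by_contra! hbt
    exact (not_le.2 htt₀) (hleast ⟨⟨hat, htt₀.le.trans ht₀t₁⟩, hbt⟩)

theorem monotoneOn_exp_mul_mul_of_deriv_add_mul_nonneg {b b' : ℝ → ℝ} {α a c : ℝ}
    (hb : ∀ t ∈ Icc a c, HasDerivAt b (b' t) t) (hb' : ∀ t ∈ Ioo a c, 0 ≤ b' t + α * b t) :
    MonotoneOn (fun t => Real.exp (α * t) * b t) (Icc a c) := by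
  have hderiv : ∀ t ∈ Icc a c, HasDerivAt (fun t => Real.exp (α * t) * b t)
      (Real.exp (α * t) * (b' t + α * b t)) t := fun t ht =>
    (((hasDerivAt_id' t).const_mul α).exp.fun_mul (hb t ht)).congr_deriv (by ring)
  refine monotoneOn_of_hasDerivWithinAt_nonneg (convex_Icc a c)
    (fun t ht => (hderiv t ht).continuousAt.continuousWithinAt)
    (fun t ht => (hderiv t (interior_subset ht)).hasDerivWithinAt) fun t ht => ?_
  rw [interior_Icc] at ht
  exact mul_nonneg (Real.exp_pos _).le (hb' t ht)

theorem pos_of_hasDerivAt_of_deriv_add_mul_nonneg {b b' : ℝ → ℝ} {α : ℝ}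
    (hb : ∀ t, 0 ≤ t → HasDerivAt b (b' t) t)
    (hb' : ∀ t, 0 ≤ t → 0 < b t → 0 ≤ b' t + α * b t) (h0 : 0 < b 0) {t : ℝ} (ht : 0 ≤ t) :
    0 < b t := by
  by_contra! hbt
  obtain ⟨t₀, ht₀, hbt₀, hpos⟩ := ContinuousOn.exists_first_nonpos
    (fun s hs => (hb s hs.1).continuousAt.continuousWithinAt) ht h0 hbt
  have hmono := monotoneOn_exp_mul_mul_of_deriv_add_mul_nonneg (α := α)
    (fun s hs => hb s hs.1) fun s hs => hb' s hs.1.le (hpos s ⟨hs.1.le, hs.2⟩)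
  have h := hmono (left_mem_Icc.2 ht₀.le) (right_mem_Icc.2 ht₀.le) ht₀.le
  simp only [mul_zero, Real.exp_zero, one_mul] at h
  nlinarith [Real.exp_pos (α * t₀)]

theorem sos_safe_stabilization_with_obstacles_general {N r : ℕ}
    (F : Fin N → MvPolynomial (Fin N) ℝ)
    (V B : MvPolynomial (Fin N) ℝ) (m : Fin r → MvPolynomial (Fin N) ℝ)
    (α : ℝ)
    (s₁ s₂ : MvPolynomial (Fin N) ℝ) (nn : Fin r → MvPolynomial (Fin N) ℝ)
    (hs₁ : IsSOS s₁) (hs₂ : IsSOS s₂) (hnn : ∀ i, IsSOS (nn i))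
    (h1 : IsSOS (-(lieDeriv V F) - s₁ * B))
    (h2 : IsSOS (lieDeriv B F + (C α - s₂) * B))
    (h3 : ∀ i, IsSOS (-(nn i * m i) - B))
    (x : ℝ → Fin N → ℝ)
    (hx : ∀ i, ∀ t : ℝ, 0 ≤ t → HasDerivAt (fun τ => x τ i) (eval (x t) (F i)) t)
    (h0 : 0 < eval (x 0) B) :
    (∀ t : ℝ, 0 ≤ t → 0 < eval (x t) B) ∧
    (∀ t : ℝ, 0 ≤ t → ∀ i, eval (x t) (m i) < 0) ∧
    AntitoneOn (fun t => eval (x t) V) (Ici 0) := by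
  have hW : ∀ W t, 0 ≤ t → HasDerivAt (fun τ => eval (x τ) W) (eval (x t) (lieDeriv W F)) t :=
    fun W t ht => hasDerivAt_eval_lieDeriv (fun i => hx i t ht) W
  have hB : ∀ t, 0 ≤ t → 0 < eval (x t) B := by
    refine fun t ht => pos_of_hasDerivAt_of_deriv_add_mul_nonneg (α := α) (hW B)
      (fun s _ hBs => ?_) h0 ht
    have h2s := h2.eval_nonneg (x s)
    simp only [map_add, map_mul, map_sub, eval_C] at h2s
    nlinarith [mul_nonneg (hs₂.eval_nonneg (x s)) hBs.le]
  refine ⟨hB, fun t ht i => ?_, ?_⟩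
  · have h3t := (h3 i).eval_nonneg (x t)
    simp only [map_sub, map_neg, map_mul] at h3t
    exact neg_of_mul_neg_right (by linarith [hB t ht]) ((hnn i).eval_nonneg (x t))
  · refine antitoneOn_of_hasDerivWithinAt_nonpos (convex_Ici 0)
      (fun t ht => (hW V t ht).continuousAt.continuousWithinAt)
      (fun t ht => (hW V t (interior_subset ht)).hasDerivWithinAt) fun t ht => ?_
    have ht : 0 ≤ t := interior_subset ht
    have h1t := h1.eval_nonneg (x t)
    simp only [map_sub, map_neg, map_mul] at h1t
    nlinarith [mul_nonneg (hs₁.eval_nonneg (x t)) (hB t ht).le]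

/-- Theorem 3 (safe stabilization with unsafe regions): under the SOS feasibility
constraints with obstacle multipliers `nᵢ`, every trajectory of `ẋ = F(x)` starting
with `B(x(0)) > 0` keeps `B > 0`, never enters any region `{y | mᵢ(y) ≥ 0}`, and
`V` is nonincreasing along it. -/
theorem sos_safe_stabilization_with_obstacles {N r : ℕ}
    (F : Fin N → MvPolynomial (Fin N) ℝ)
    (V B : MvPolynomial (Fin N) ℝ) (m : Fin r → MvPolynomial (Fin N) ℝ)
    (α : ℝ) (hα : 0 < α)
    (s₁ s₂ : MvPolynomial (Fin N) ℝ) (nn : Fin r → MvPolynomial (Fin N) ℝ)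
    (hs₁ : IsSOS s₁) (hs₂ : IsSOS s₂) (hnn : ∀ i, IsSOS (nn i))
    (h1 : IsSOS (-(lieDeriv V F) - s₁ * B))
    (h2 : IsSOS (lieDeriv B F + (C α - s₂) * B))
    (h3 : ∀ i, IsSOS (-(nn i * m i) - B))
    (x : ℝ → Fin N → ℝ)
    (hx : ∀ i, ∀ t : ℝ, 0 ≤ t → HasDerivAt (fun τ => x τ i) (eval (x t) (F i)) t)
    (h0 : 0 < eval (x 0) B) :
    (∀ t : ℝ, 0 ≤ t → 0 < eval (x t) B) ∧
    (∀ t : ℝ, 0 ≤ t → ∀ i, eval (x t) (m i) < 0) ∧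
    AntitoneOn (fun t => eval (x t) V) (Ici 0) :=
  sos_safe_stabilization_with_obstacles_general F V B m α s₁ s₂ nn hs₁ hs₂ hnn h1 h2 h3 x hx h0
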